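/- The symmetric inverse monoid I_ℕ, with the Polish semigroup topology 𝒯 generated by the sets U_{x,y} = {h : (x,y) ∈ h} and W_x = {h : x ∉ dom(h)}, embeds topologically into ℕ^ℕ via the map sending g to the total function that sends x+1 to g(x)+1 when x ∈ dom(g), sends x+1 to 0 when x ∉ dom(g), and sends 0 to 0. -/

import Mathlib

/-- A partial bijection of `ℕ`, encoded as its graph: a functional and
co-functional relation. -/
def IsPartialBij (R : Set (ℕ × ℕ)) : Prop :=
  (∀ x y y', (x, y) ∈ R → (x, y') ∈ R → y = y') ∧
  (∀ x x' y, (x, y) ∈ R → (x', y) ∈ R → x = x')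

/-- The symmetric inverse monoid `I_ℕ` of all partial bijections between
subsets of `ℕ`. -/
def IN : Type := {R : Set (ℕ × ℕ) // IsPartialBij R}

/-- Left-to-right composition of partial bijections. -/
instance : Mul IN :=
  ⟨fun f g => ⟨{p | ∃ y, (p.1, y) ∈ f.1 ∧ (y, p.2) ∈ g.1}, by
    obtain ⟨f, hf1, hf2⟩ := f; obtain ⟨g, hg1, hg2⟩ := g
    constructor
    · rintro x y y' ⟨a, ha1, ha2⟩ ⟨b, hb1, hb2⟩
      cases hf1 x a b ha1 hb1
      exact hg1 a y y' ha2 hb2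
    · rintro x x' y ⟨a, ha1, ha2⟩ ⟨b, hb1, hb2⟩
      cases hg2 a b y ha2 hb2
      exact hf2 x x' a ha1 hb1⟩⟩

/-- The Polish semigroup topology `𝒯` on `I_ℕ`, generated by the sets
`U_{x,y} = {h | (x,y) ∈ h}` and `W_x = {h | x ∉ dom h}` only. -/
instance : TopologicalSpace IN :=
  TopologicalSpace.generateFrom
    ({A | ∃ x y : ℕ, A = {h : IN | (x, y) ∈ h.1}} ∪
     {A | ∃ x : ℕ, A = {h : IN | ∀ y, (x, y) ∉ h.1}})

/-!
On `x + 1` the value of `F g` records whether `x ∈ dom g` (value `0` or not) and, if so, the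
image `g x` (value `g x + 1`); the point `0` absorbs undefinedness, so that composition of partial
bijections becomes composition of total functions. Since `ℕ` is discrete, the product topology on
`ℕ^ℕ` is generated by the sets `{f | f n = k}`, and their preimages under `F` are exactly the
sets `U_{x,y}` (`n = x + 1`, `k = y + 1`), the sets `W_x` (`n = x + 1`, `k = 0`), or `∅`/`univ`
(`n = 0`). Hence `F` induces the topology `𝒯`.
-/

namespace IN

theorem mem_mul {a b : IN} {x z : ℕ} : (x, z) ∈ (a * b).1 ↔ ∃ y, (x, y) ∈ a.1 ∧ (y, z) ∈ b.1 :=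
  Iff.rfl

section ShiftedGraph

variable {F : IN → ℕ → ℕ}

theorem apply_succ_eq_zero_iff
    (hFdef : ∀ g : IN, ∀ x y : ℕ, (x, y) ∈ g.1 → F g (x + 1) = y + 1)
    (hFundef : ∀ g : IN, ∀ x : ℕ, (∀ y, (x, y) ∉ g.1) → F g (x + 1) = 0)
    (g : IN) (x : ℕ) : F g (x + 1) = 0 ↔ ∀ y, (x, y) ∉ g.1 :=
  ⟨fun h y hxy => Nat.succ_ne_zero y ((hFdef g x y hxy).symm.trans h), hFundef g x⟩

theorem apply_succ_eq_succ_iff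
    (hFdef : ∀ g : IN, ∀ x y : ℕ, (x, y) ∈ g.1 → F g (x + 1) = y + 1)
    (hFundef : ∀ g : IN, ∀ x : ℕ, (∀ y, (x, y) ∉ g.1) → F g (x + 1) = 0)
    (g : IN) (x y : ℕ) : F g (x + 1) = y + 1 ↔ (x, y) ∈ g.1 := by
  refine ⟨fun h => ?_, hFdef g x y⟩
  by_cases hx : ∃ y', (x, y') ∈ g.1
  · obtain ⟨y', hxy'⟩ := hx
    rw [hFdef g x y' hxy', Nat.succ_inj] at h
    exact h ▸ hxy'
  · rw [hFundef g x (not_exists.mp hx)] at h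
    exact absurd h.symm (Nat.succ_ne_zero y)

theorem injective_of_apply_succ
    (hFdef : ∀ g : IN, ∀ x y : ℕ, (x, y) ∈ g.1 → F g (x + 1) = y + 1)
    (hFundef : ∀ g : IN, ∀ x : ℕ, (∀ y, (x, y) ∉ g.1) → F g (x + 1) = 0) :
    Function.Injective F := by
  intro a b hab
  refine Subtype.ext (Set.ext fun ⟨x, y⟩ => ?_)
  rw [← apply_succ_eq_succ_iff hFdef hFundef a x y, ← apply_succ_eq_succ_iff hFdef hFundef b x y,
    hab]

theorem map_mul_eq_comp (hF0 : ∀ g : IN, F g 0 = 0)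
    (hFdef : ∀ g : IN, ∀ x y : ℕ, (x, y) ∈ g.1 → F g (x + 1) = y + 1)
    (hFundef : ∀ g : IN, ∀ x : ℕ, (∀ y, (x, y) ∉ g.1) → F g (x + 1) = 0)
    (a b : IN) : F (a * b) = F b ∘ F a := by
  funext n
  rcases n with _ | x
  · simp only [Function.comp_apply, hF0]
  show F (a * b) (x + 1) = F b (F a (x + 1))
  by_cases ha : ∃ y, (x, y) ∈ a.1
  · obtain ⟨y, hxy⟩ := ha
    rw [hFdef a x y hxy]
    by_cases hb : ∃ z, (y, z) ∈ b.1
    · obtain ⟨z, hyz⟩ := hb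
      rw [hFdef b y z hyz]
      exact hFdef _ x z (mem_mul.mpr ⟨y, hxy, hyz⟩)
    · rw [hFundef b y (not_exists.mp hb)]
      refine hFundef _ x fun z hxz => ?_
      obtain ⟨w, hxw, hwz⟩ := mem_mul.mp hxz
      exact hb ⟨z, a.2.1 x w y hxw hxy ▸ hwz⟩
  · rw [hFundef a x (not_exists.mp ha), hF0]
    refine hFundef _ x fun z hxz => ?_
    obtain ⟨w, hxw, -⟩ := mem_mul.mp hxz
    exact ha ⟨w, hxw⟩

theorem isOpen_setOf_apply_eq (hF0 : ∀ g : IN, F g 0 = 0)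
    (hFdef : ∀ g : IN, ∀ x y : ℕ, (x, y) ∈ g.1 → F g (x + 1) = y + 1)
    (hFundef : ∀ g : IN, ∀ x : ℕ, (∀ y, (x, y) ∉ g.1) → F g (x + 1) = 0)
    (n k : ℕ) : IsOpen {g : IN | F g n = k} := by
  rcases n with _ | x
  · simp only [hF0]
    exact isOpen_const
  rcases k with _ | y
  · rw [Set.ext fun g => apply_succ_eq_zero_iff hFdef hFundef g x]
    exact TopologicalSpace.isOpen_generateFrom_of_mem (Or.inr ⟨x, rfl⟩)
  · rw [Set.ext fun g => apply_succ_eq_succ_iff hFdef hFundef g x y]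
    exact TopologicalSpace.isOpen_generateFrom_of_mem (Or.inl ⟨x, y, rfl⟩)

theorem induced_le_of_apply_succ
    (hFdef : ∀ g : IN, ∀ x y : ℕ, (x, y) ∈ g.1 → F g (x + 1) = y + 1)
    (hFundef : ∀ g : IN, ∀ x : ℕ, (∀ y, (x, y) ∉ g.1) → F g (x + 1) = 0) :
    TopologicalSpace.induced F Pi.topologicalSpace ≤ (inferInstance : TopologicalSpace IN) := by
  have isOpen_eval_eq (n k : ℕ) : IsOpen {f : ℕ → ℕ | f n = k} :=
    (continuous_apply (A := fun _ => ℕ) n).isOpen_preimage {k} (isOpen_discrete _)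
  refine le_generateFrom ?_
  rintro s (⟨x, y, rfl⟩ | ⟨x, rfl⟩)
  · exact ⟨_, isOpen_eval_eq (x + 1) (y + 1),
      Set.ext fun g => apply_succ_eq_succ_iff hFdef hFundef g x y⟩
  · exact ⟨_, isOpen_eval_eq (x + 1) 0,
      Set.ext fun g => apply_succ_eq_zero_iff hFdef hFundef g x⟩

end ShiftedGraph

end IN

/-- `(I_ℕ, 𝒯)` embeds topologically into `ℕ^ℕ` (functions under left-to-right
composition, product topology) via the map sending `g` to the total function
that sends `x+1` to `g(x)+1` when `x ∈ dom g`, sends `x+1` to `0` when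
`x ∉ dom g`, and sends `0` to `0`. -/
theorem IN_T2_embeds_into_NN (F : IN → (ℕ → ℕ))
    (hF0 : ∀ g : IN, F g 0 = 0)
    (hFdef : ∀ g : IN, ∀ x y : ℕ, (x, y) ∈ g.1 → F g (x + 1) = y + 1)
    (hFundef : ∀ g : IN, ∀ x : ℕ, (∀ y, (x, y) ∉ g.1) → F g (x + 1) = 0) :
    Function.Injective F ∧ (∀ a b : IN, F (a * b) = F b ∘ F a) ∧
      Topology.IsEmbedding F := by
  have hinj := IN.injective_of_apply_succ hFdef hFundef
  have hcont : Continuous F :=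
    continuous_pi fun n => continuous_discrete_rng.mpr fun k =>
      IN.isOpen_setOf_apply_eq hF0 hFdef hFundef n k
  have hinduced := IN.induced_le_of_apply_succ hFdef hFundef
  exact ⟨hinj, IN.map_mul_eq_comp hF0 hFdef hFundef,
    ⟨⟨le_antisymm (continuous_iff_le_induced.mp hcont) hinduced⟩, hinj⟩⟩
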